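/- If c·log|y| + f = c'·log|y| + f' on U \ Z, where f, f' are continuous on U and Z = y⁻¹(0) is nonempty, then c = c' and f = f' on U. -/

import Mathlib

open Set Filter Topology

/-- Uniqueness of the decomposition of a b-function: if `c·log|y| + f = c'·log|y| + f'`
on `U \ Z` with `f, f'` continuous on the open connected set `U`, `y` smooth with `0` a
regular value and `Z = y⁻¹(0) ∩ U` nonempty, then `c = c'` and `f = f'` on `U`. -/
theorem bfunction_decomposition_unique {n : ℕ}
    (U : Set (EuclideanSpace ℝ (Fin n))) (hU : IsOpen U) (hUconn : IsConnected U)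
    (y : EuclideanSpace ℝ (Fin n) → ℝ) (hy : ContDiffOn ℝ (⊤ : ℕ∞) y U)
    (hreg : ∀ x ∈ U, y x = 0 → fderiv ℝ y x ≠ 0)
    (Z : Set (EuclideanSpace ℝ (Fin n))) (hZ : Z = {x ∈ U | y x = 0}) (hZne : Z.Nonempty)
    (c c' : ℝ) (f f' : EuclideanSpace ℝ (Fin n) → ℝ)
    (hf : ContinuousOn f U) (hf' : ContinuousOn f' U)
    (heq : ∀ x ∈ U \ Z,
      c * Real.log (abs (y x)) + f x = c' * Real.log (abs (y x)) + f' x) :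
    c = c' ∧ ∀ x ∈ U, f x = f' x := by
  -- Auxiliary: for each zero z of y in U, a curve approaching z through U \ Z.
  have key : ∀ z ∈ U, y z = 0 → ∃ φ : ℝ → EuclideanSpace ℝ (Fin n),
      Tendsto φ (𝓝[≠] (0:ℝ)) (𝓝[U \ Z] z) := by
    intro z hzU hyz
    have hdiff : DifferentiableAt ℝ y z :=
      (hy.contDiffAt (hU.mem_nhds hzU)).differentiableAt (by simp)
    have hL : fderiv ℝ y z ≠ 0 := hreg z hzU hyz
    obtain ⟨v, hv⟩ : ∃ v, fderiv ℝ y z v ≠ 0 := by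
      by_contra h
      push_neg at h
      exact hL (ContinuousLinearMap.ext fun w => by simpa using h w)
    refine ⟨fun t => z + t • v, ?_⟩
    have hφ0 : HasDerivAt (fun t : ℝ => z + t • v) v 0 := by
      simpa using ((hasDerivAt_id (0:ℝ)).smul_const v).const_add z
    have hg : HasDerivAt (fun t : ℝ => y (z + t • v)) (fderiv ℝ y z v) 0 := by
      have h0 : z = z + (0:ℝ) • v := by simp
      rw [h0] at hdiff
      have := hdiff.hasFDerivAt.comp_hasDerivAt 0 hφ0
      simp only [zero_smul, add_zero] at this
      exact this
    have hslope := hasDerivAt_iff_tendsto_slope.mp hg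
    have hne : ∀ᶠ t in 𝓝[≠] (0:ℝ), y (z + t • v) ≠ 0 := by
      filter_upwards [hslope.eventually_ne hv, self_mem_nhdsWithin] with t ht ht0
      intro h0
      apply ht
      simp [slope, h0, hyz]
    have hcont : Continuous fun t : ℝ => z + t • v := by continuity
    have htend : Tendsto (fun t : ℝ => z + t • v) (𝓝[≠] (0:ℝ)) (𝓝 z) := by
      have := hcont.tendsto 0
      simp only [zero_smul, add_zero] at this
      exact this.mono_left nhdsWithin_le_nhds
    have hmemU : ∀ᶠ t in 𝓝[≠] (0:ℝ), z + t • v ∈ U :=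
      htend.eventually (hU.mem_nhds hzU)
    rw [tendsto_nhdsWithin_iff]
    refine ⟨htend, ?_⟩
    filter_upwards [hmemU, hne] with t h1 h2
    exact ⟨h1, by simp [hZ, h2]⟩
  -- The function log|y| tends to -∞ along such a curve.
  have logbot : ∀ z ∈ U, y z = 0 → ∀ φ : ℝ → EuclideanSpace ℝ (Fin n),
      Tendsto φ (𝓝[≠] (0:ℝ)) (𝓝[U \ Z] z) →
      Tendsto (fun t => Real.log |y (φ t)|) (𝓝[≠] (0:ℝ)) atBot := by
    intro z hzU hyz φ hφ
    have hyt : Tendsto (fun t => |y (φ t)|) (𝓝[≠] (0:ℝ)) (𝓝[>] (0:ℝ)) := by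
      rw [tendsto_nhdsWithin_iff]
      constructor
      · have hyU : Tendsto y (𝓝[U] z) (𝓝 0) := by
          have := (hy.continuousOn z hzU).tendsto
          rwa [hyz] at this
        have : Tendsto (fun t => y (φ t)) (𝓝[≠] (0:ℝ)) (𝓝 0) :=
          hyU.comp (hφ.mono_right (nhdsWithin_mono z diff_subset))
        simpa using this.abs
      · filter_upwards [tendsto_nhdsWithin_iff.mp hφ |>.2] with t ht
        have : y (φ t) ≠ 0 := by
          have := ht.2
          rw [hZ] at this
          simp only [mem_setOf_eq, not_and] at this
          exact this ht.1
        exact abs_pos.mpr this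
    exact Real.tendsto_log_nhdsGT_zero.comp hyt
  -- Step 1 : c = c'
  obtain ⟨z, hz⟩ := hZne
  have hzU : z ∈ U := by rw [hZ] at hz; exact hz.1
  have hyz : y z = 0 := by rw [hZ] at hz; exact hz.2
  obtain ⟨φ, hφ⟩ := key z hzU hyz
  have hbot := logbot z hzU hyz φ hφ
  have hφU : Tendsto φ (𝓝[≠] (0:ℝ)) (𝓝[U] z) := hφ.mono_right (nhdsWithin_mono z diff_subset)
  have hmemUZ : ∀ᶠ t in 𝓝[≠] (0:ℝ), φ t ∈ U \ Z := tendsto_nhdsWithin_iff.mp hφ |>.2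
  have hcc : c = c' := by
    by_contra hcc
    have hsub : c - c' ≠ 0 := sub_ne_zero.mpr hcc
    have hlim : Tendsto (fun t => Real.log |y (φ t)|) (𝓝[≠] (0:ℝ))
        (𝓝 ((f' z - f z) / (c - c'))) := by
      have hf1 : Tendsto (fun t => f (φ t)) (𝓝[≠] (0:ℝ)) (𝓝 (f z)) :=
        (hf z hzU).tendsto.comp hφU
      have hf2 : Tendsto (fun t => f' (φ t)) (𝓝[≠] (0:ℝ)) (𝓝 (f' z)) :=
        (hf' z hzU).tendsto.comp hφU
      have hlim' : Tendsto (fun t => (f' (φ t) - f (φ t)) / (c - c')) (𝓝[≠] (0:ℝ))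
          (𝓝 ((f' z - f z) / (c - c'))) := (hf2.sub hf1).div_const _
      refine hlim'.congr' ?_
      filter_upwards [hmemUZ] with t ht
      have h := heq (φ t) ht
      rw [div_eq_iff hsub]
      linear_combination -h
    exact not_tendsto_nhds_of_tendsto_atBot hbot _ hlim
  refine ⟨hcc, fun x hxU => ?_⟩
  -- Step 2 : f = f' on U
  have hUZ : ∀ x ∈ U \ Z, f x = f' x := by
    intro x hx
    have := heq x hx
    rw [hcc] at this
    linarith
  by_cases hx : x ∈ Z
  · have hyx : y x = 0 := by rw [hZ] at hx; exact hx.2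
    obtain ⟨ψ, hψ⟩ := key x hxU hyx
    have hψU : Tendsto ψ (𝓝[≠] (0:ℝ)) (𝓝[U] x) := hψ.mono_right (nhdsWithin_mono x diff_subset)
    have hmem : ∀ᶠ t in 𝓝[≠] (0:ℝ), ψ t ∈ U \ Z := tendsto_nhdsWithin_iff.mp hψ |>.2
    have hf1 : Tendsto (fun t => f (ψ t)) (𝓝[≠] (0:ℝ)) (𝓝 (f x)) :=
      (hf x hxU).tendsto.comp hψU
    have hf2 : Tendsto (fun t => f' (ψ t)) (𝓝[≠] (0:ℝ)) (𝓝 (f' x)) :=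
      (hf' x hxU).tendsto.comp hψU
    have : Tendsto (fun t => f (ψ t)) (𝓝[≠] (0:ℝ)) (𝓝 (f' x)) := by
      refine hf2.congr' ?_
      filter_upwards [hmem] with t ht
      exact (hUZ (ψ t) ht).symm
    exact tendsto_nhds_unique hf1 this
  · exact hUZ x ⟨hxU, hx⟩
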